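/- Let q be an odd prime power, ξ a nonsquare in F_q, b ∈ F_{q^3}* with N_{q^3/q}(b) ∉ {1,-1}, and assume N_{q^3/q}(b²) = -1. Then the multiplication (u,v) ⋆_{AB} (x,y) = (u·x + v·A_{b²,r}(y), u·y + ξ·v·B_{b,-r}(x)) on F_{q^3} × F_{q^3} has no zero divisors, i.e., for (x,y) ≠ (0,0), the determinant ξ·x·B_{b,-r}(x) - y·A_{b²,r}(y) ≠ 0. -/

import Mathlib

/-!
Write `σ y = y ^ q ^ (3 - r)`, whose inverse is `y ↦ y ^ q ^ r`, and `N` for the norm of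
`F_{q³}/F_q`. If `N c ≠ 1`, then `y ↦ y - c σ y` is injective: `a = c σ a` with `a ≠ 0` forces
`c = a / σ a`, which has norm `1`. Hence `H` is bijective, and for `x = H w` the determinant is
`L (ξ w² - y σ⁻¹ y)` with `L u = u - b² σ u`, which is injective because `N (b²) = N(b)² ≠ 1`.
So `ξ w² = y σ⁻¹ y`; taking norms gives `ξ³ N(w)² = N(y)²`, which makes `ξ` a square in `F_q`
unless `w = 0`, and then `x = y = 0`.
-/

open Function

section TwistedLinear

variable {K : Type*} [Field K] (σ : K →+* K) (N : K →*₀ K)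

theorem eq_zero_of_sub_mul_apply_eq_zero (hN : ∀ a, N (σ a) = N a) {c a : K} (hc : N c ≠ 1)
    (h : a - c * σ a = 0) : a = 0 := by
  by_contra ha
  have hc_eq : c = a / σ a := by
    rw [eq_div_iff ((map_ne_zero σ).2 ha)]
    linear_combination -h
  rw [hc_eq, map_div₀, hN, div_self ((map_ne_zero N).2 ha)] at hc
  exact hc rfl

theorem sub_mul_apply_injective (hN : ∀ a, N (σ a) = N a) {c : K} (hc : N c ≠ 1) :
    Injective fun x => x - c * σ x := fun u v huv =>
  sub_eq_zero.1 <| eq_zero_of_sub_mul_apply_eq_zero σ N hN hc <| by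
    rw [map_sub]
    linear_combination huv

end TwistedLinear

theorem pow_pow_eq_self {M : Type*} [Monoid M] {q : ℕ} {a : M} (h : a ^ q = a) (s : ℕ) :
    a ^ q ^ s = a := by
  induction s with
  | zero => rw [pow_zero, pow_one]
  | succ s ih => rw [pow_succ, pow_mul, ih, h]

def cubicNorm {M : Type*} [Monoid M] (q : ℕ) (a : M) : M := a ^ (1 + q + q ^ 2)

theorem cubicNorm_mul {M : Type*} [CommMonoid M] (q : ℕ) (a b : M) :
    cubicNorm q (a * b) = cubicNorm q a * cubicNorm q b :=
  mul_pow a b _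

theorem cubicNorm_pow {M : Type*} [Monoid M] (q : ℕ) (a : M) (n : ℕ) :
    cubicNorm q (a ^ n) = cubicNorm q a ^ n :=
  pow_right_comm a n _

theorem cubicNorm_of_pow_eq_self {M : Type*} [CommMonoid M] {q : ℕ} {a : M} (h : a ^ q = a) :
    cubicNorm q a = a ^ 3 := by
  rw [cubicNorm, pow_add, pow_add, pow_one, h, pow_pow_eq_self h, pow_three']

section CubicExtension

variable {K : Type*} [Field K] [Fintype K] {q : ℕ}

theorem ne_zero_of_card_eq_pow {n : ℕ} (hcard : Fintype.card K = q ^ n) (hn : n ≠ 0) :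
    q ≠ 0 := by
  rintro rfl
  exact Fintype.card_ne_zero (hcard.trans (zero_pow hn))

theorem exists_ringHom_eq_pow_pow {n : ℕ} (hcard : Fintype.card K = q ^ n) (hn : n ≠ 0)
    (s : ℕ) : ∃ σ : K →+* K, ∀ x, σ x = x ^ q ^ s := by
  obtain ⟨k, hp, hk⟩ := FiniteField.card K (ringChar K)
  obtain ⟨m, -, rfl⟩ := (Nat.dvd_prime_pow hp).1 (hk ▸ hcard ▸ dvd_pow_self q hn)
  have : Fact (ringChar K).Prime := ⟨hp⟩
  exact ⟨iterateFrobenius K (ringChar K) (m * s), fun x => by rw [iterateFrobenius_def, pow_mul]⟩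

theorem cubicNorm_pow_eq_self (hcard : Fintype.card K = q ^ 3) (a : K) :
    cubicNorm q a ^ q = cubicNorm q a := by
  have h3 : a ^ q ^ 3 = a := hcard ▸ FiniteField.pow_card a
  rw [cubicNorm, ← pow_mul, show (1 + q + q ^ 2) * q = q ^ 3 + (q + q ^ 2) by ring, pow_add, h3,
    ← pow_succ', add_comm, ← add_assoc]

theorem cubicNorm_pow_pow (hcard : Fintype.card K = q ^ 3) (a : K) (s : ℕ) :
    cubicNorm q (a ^ q ^ s) = cubicNorm q a := by
  rw [cubicNorm_pow]
  exact pow_pow_eq_self (cubicNorm_pow_eq_self hcard a) s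

theorem sub_mul_pow_pow_injective (hcard : Fintype.card K = q ^ 3) {c : K}
    (hc : cubicNorm q c ≠ 1) (s : ℕ) : Injective fun x : K => x - c * x ^ q ^ s := by
  obtain ⟨σ, hσ⟩ := exists_ringHom_eq_pow_pow hcard three_ne_zero s
  let N : K →*₀ K := powMonoidWithZeroHom (n := 1 + q + q ^ 2) (by positivity)
  have hN : ∀ a, N (σ a) = N a := fun a => by
    simp only [N, powMonoidWithZeroHom_apply, hσ]
    exact cubicNorm_pow_pow hcard a s
  simpa only [hσ] using sub_mul_apply_injective σ N hN hc

theorem det_eq_sub_mul_pow_pow (hcard : Fintype.card K = q ^ 3) {r : ℕ} (hr : r ≤ 3) {ξ : K}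
    (hξ : ξ ^ q = ξ) (b w y : K) :
    ξ * (w - b * w ^ q ^ (3 - r)) * (2 * w - (w - b * w ^ q ^ (3 - r)))
        - y * (y ^ q ^ r - b ^ 2 * y ^ q ^ (3 - r)) =
      (ξ * w ^ 2 - y * y ^ q ^ r) - b ^ 2 * (ξ * w ^ 2 - y * y ^ q ^ r) ^ q ^ (3 - r) := by
  obtain ⟨σ, hσ⟩ := exists_ringHom_eq_pow_pow hcard three_ne_zero (3 - r)
  have hy : (y ^ q ^ r) ^ q ^ (3 - r) = y := by
    have h3 : y ^ q ^ 3 = y := hcard ▸ FiniteField.pow_card y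
    rw [← pow_mul, ← pow_add, Nat.add_sub_cancel' hr, h3]
  have hσz : (ξ * w ^ 2 - y * y ^ q ^ r) ^ q ^ (3 - r) =
      ξ * (w ^ q ^ (3 - r)) ^ 2 - y ^ q ^ (3 - r) * y := by
    rw [← hσ, map_sub, map_mul, map_mul, map_pow, hσ, hσ, hσ, hσ, pow_pow_eq_self hξ, hy]
  rw [hσz]
  ring

theorem eq_zero_of_mul_sq_eq_mul_pow_pow (hcard : Fintype.card K = q ^ 3) {ξ : K}
    (hξq : ξ ^ q = ξ) (hξns : ¬ ∃ c : K, c ^ q = c ∧ c ^ 2 = ξ) (r : ℕ) {w y : K}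
    (h : ξ * w ^ 2 = y * y ^ q ^ r) : w = 0 := by
  by_contra hw
  have hξ : ξ ≠ 0 := by
    rintro rfl
    exact hξns ⟨0, zero_pow (ne_zero_of_card_eq_pow hcard three_ne_zero), zero_pow two_ne_zero⟩
  have hnorm : ξ ^ 3 * cubicNorm q w ^ 2 = cubicNorm q y ^ 2 := by
    calc ξ ^ 3 * cubicNorm q w ^ 2 = cubicNorm q (ξ * w ^ 2) := by
          rw [cubicNorm_mul, cubicNorm_pow, cubicNorm_of_pow_eq_self hξq]
      _ = cubicNorm q y ^ 2 := by
          rw [h, cubicNorm_mul, cubicNorm_pow_pow hcard, sq]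
  refine hξns ⟨cubicNorm q y / (ξ * cubicNorm q w), ?_, ?_⟩
  · rw [div_pow, mul_pow, cubicNorm_pow_eq_self hcard, cubicNorm_pow_eq_self hcard, hξq]
  · have hNw : cubicNorm q w ≠ 0 := pow_ne_zero _ hw
    rw [div_pow, mul_pow, div_eq_iff (by positivity)]
    linear_combination -hnorm

end CubicExtension

theorem stmt12_general (q : ℕ)
    (K : Type*) [Field K] [Fintype K] (hcard : Fintype.card K = q ^ 3)
    (ξ : K) (hξq : ξ ^ q = ξ) (hξns : ¬ ∃ c : K, c ^ q = c ∧ c ^ 2 = ξ)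
    (b : K)
    (hN1 : b ^ (1 + q + q ^ 2) ≠ 1) (hN2 : b ^ (1 + q + q ^ 2) ≠ -1)
    (r : ℕ) (hr : r = 1 ∨ r = 2) :
    let H : K → K := fun x => x - b * x ^ q ^ (3 - r)
    let B : K → K := fun x => 2 * Function.invFun H x - x
    ∀ x y : K, ¬ (x = 0 ∧ y = 0) →
      ξ * x * B x - y * (y ^ q ^ r - b ^ 2 * y ^ q ^ (3 - r)) ≠ 0 := by
  intro H B x y hxy hdet
  have hqs : q ^ (3 - r) ≠ 0 := pow_ne_zero _ (ne_zero_of_card_eq_pow hcard three_ne_zero)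
  have hH : Surjective H :=
    Finite.injective_iff_surjective.1 (sub_mul_pow_pow_injective hcard hN1 (3 - r))
  set w := invFun H x
  have hx : w - b * w ^ q ^ (3 - r) = x := invFun_eq (hH x)
  have hb2 : cubicNorm q (b ^ 2) ≠ 1 := by
    rw [cubicNorm_pow]
    exact sq_ne_one_iff.2 ⟨hN1, hN2⟩
  have hwy : ξ * w ^ 2 = y * y ^ q ^ r := by
    refine sub_eq_zero.1 (sub_mul_pow_pow_injective hcard hb2 (3 - r) ?_)
    dsimp only
    rw [zero_pow hqs, mul_zero, sub_zero, ← det_eq_sub_mul_pow_pow hcard (by omega) hξq, hx]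
    exact hdet
  have hw : w = 0 := eq_zero_of_mul_sq_eq_mul_pow_pow hcard hξq hξns r hwy
  refine hxy ⟨?_, ?_⟩
  · rw [← hx, hw, zero_pow hqs, mul_zero, sub_zero]
  · rw [hw, zero_pow two_ne_zero, mul_zero, eq_comm, mul_eq_zero] at hwy
    exact hwy.elim id eq_zero_of_pow_eq_zero

/-- the Dempwolff multiplication `⋆_{AB}` has no zero divisors:
for `(x,y) ≠ (0,0)`, `ξ x B_{b,-r}(x) - y A_{b²,r}(y) ≠ 0`. -/
theorem stmt12 (q : ℕ) (hq : IsPrimePow q) (hodd : Odd q)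
    (K : Type*) [Field K] [Fintype K] (hcard : Fintype.card K = q ^ 3)
    (ξ : K) (hξq : ξ ^ q = ξ) (hξns : ¬ ∃ c : K, c ^ q = c ∧ c ^ 2 = ξ)
    (b : K) (hb : b ≠ 0)
    (hN1 : b ^ (1 + q + q ^ 2) ≠ 1) (hN2 : b ^ (1 + q + q ^ 2) ≠ -1)
    (hNsq : b ^ (2 * (1 + q + q ^ 2)) = -1)
    (r : ℕ) (hr : r = 1 ∨ r = 2) :
    let H : K → K := fun x => x - b * x ^ q ^ (3 - r)
    let B : K → K := fun x => 2 * Function.invFun H x - x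
    ∀ x y : K, ¬ (x = 0 ∧ y = 0) →
      ξ * x * B x - y * (y ^ q ^ r - b ^ 2 * y ^ q ^ (3 - r)) ≠ 0 :=
  stmt12_general q K hcard ξ hξq hξns b hN1 hN2 r hr
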